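/- arXiv:1301.6364 — 3 statements merged into one kernel-verified Lean document; each statement's English description precedes it below -/
import Mathlib

section
/- Let S ≥ 1, P ∈ {1,...,S}, and let (σ_n)_{n∈ℕ} and (ξ_n)_{n∈ℕ} be sequences of nonnegative real numbers. Define two sequences of nondecreasingly sorted vectors of (ℝ⁺)^S by the recursions V_{n+1} = sort([V_n + σ_n·e₁ − ξ_n·1]⁺) (the JSW service-profile recursion) and Ṽ_{n+1} = sort([Ṽ_n + σ_n·e_P − ξ_n·1]⁺) (allocation to the P-th least workload). If V_0 ≺_P Ṽ_0, then for all n ∈ ℕ one has V_n ≺_P Ṽ_n; in particular V_n ≺_* Ṽ_n and V_n(ℓ) ≤ Ṽ_n(ℓ) for all ℓ ∈ {P,...,S}. -/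
open Finset

/-- The nondecreasing rearrangement of a finite real vector. -/
noncomputable def sortVec {S : ℕ} (u : Fin S → ℝ) : Fin S → ℝ := u ∘ Tuple.sort u

/-- The Schur-convex semi-ordering `≺_c` : equal total sums, and each tail sum
(from the second coordinate on) of the sorted version of `u` is dominated by that of `v`. -/
def schurLE {S : ℕ} (u v : Fin S → ℝ) : Prop :=
  (∑ i, u i = ∑ i, v i) ∧
  ∀ k : Fin S, 1 ≤ (k : ℕ) →
    ∑ i ∈ Finset.Ici k, sortVec u i ≤ ∑ i ∈ Finset.Ici k, sortVec v i

/-- The semi-ordering `≺_*` : every tail sum of `u` is dominated by that of `v`. -/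
def starLE {S : ℕ} (u v : Fin S → ℝ) : Prop :=
  ∀ k : Fin S, ∑ i ∈ Finset.Ici k, u i ≤ ∑ i ∈ Finset.Ici k, v i

/-- The semi-ordering `≺_P` : `u ≺_* v` and `u(ℓ) ≤ v(ℓ)` for every `ℓ ≥ P`. -/
def precP {S : ℕ} (P : Fin S) (u v : Fin S → ℝ) : Prop :=
  starLE u v ∧ ∀ ℓ : Fin S, P ≤ ℓ → u ℓ ≤ v ℓ

/-- The map `G̃^P : u ↦ sort([u + σ·e_P − ξ·1]⁺)`.  For `P` the first index,
this is the Kiefer–Wolfowitz map `G`. -/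
noncomputable def GP {S : ℕ} (σ ξ : ℝ) (P : Fin S) (u : Fin S → ℝ) : Fin S → ℝ :=
  sortVec (fun i => max (u i + (if i = P then σ else 0) - ξ) 0)

section Aux
variable {S : ℕ}


lemma sortVec_monotone (u : Fin S → ℝ) : Monotone (sortVec u) := Tuple.monotone_sort u

lemma sortVec_eq_of_monotone {u : Fin S → ℝ} (hu : Monotone u) : sortVec u = u := by
  unfold sortVec
  rw [Tuple.sort_eq_refl_iff_monotone.2 hu]
  rfl

lemma card_filter_sortVec (u : Fin S → ℝ) (t : ℝ) :
    (univ.filter fun i => sortVec u i ≤ t).card = (univ.filter fun i => u i ≤ t).card := by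
  apply Finset.card_bij (fun i _ => Tuple.sort u i)
  · intro a ha; simp only [mem_filter, mem_univ, true_and] at ha ⊢; exact ha
  · intro a _ b _ h; exact (Tuple.sort u).injective h
  · intro b hb
    refine ⟨(Tuple.sort u).symm b, ?_, by simp⟩
    simp only [mem_filter, mem_univ, true_and] at hb ⊢
    show u (Tuple.sort u ((Tuple.sort u).symm b)) ≤ t
    simpa using hb

lemma sortVec_le_iff (u : Fin S → ℝ) (k : Fin S) (t : ℝ) :
    sortVec u k ≤ t ↔ (k : ℕ) + 1 ≤ (univ.filter fun i => u i ≤ t).card := by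
  rw [← card_filter_sortVec]
  constructor
  · intro h
    have hsub : Iic k ⊆ univ.filter fun i => sortVec u i ≤ t := by
      intro i hi
      simp only [mem_filter, mem_univ, true_and]
      exact (sortVec_monotone u (mem_Iic.1 hi)).trans h
    calc (k : ℕ) + 1 = (Iic k).card := (Fin.card_Iic k).symm
      _ ≤ _ := card_le_card hsub
  · intro h
    by_contra hlt
    push_neg at hlt
    have hsub : (univ.filter fun i => sortVec u i ≤ t) ⊆ Iio k := by
      intro i hi
      simp only [mem_filter, mem_univ, true_and] at hi
      rw [mem_Iio]
      by_contra hki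
      push_neg at hki
      exact absurd ((sortVec_monotone u hki).trans hi) (not_le.2 hlt)
    have := card_le_card hsub
    rw [Fin.card_Iio] at this
    omega

lemma sortVec_le_sortVec {a b : Fin S → ℝ} (h : ∀ i, a i ≤ b i) (k : Fin S) :
    sortVec a k ≤ sortVec b k := by
  rw [sortVec_le_iff]
  refine ((sortVec_le_iff b k (sortVec b k)).1 le_rfl).trans (card_le_card ?_)
  intro i hi
  simp only [mem_filter, mem_univ, true_and] at hi ⊢
  exact (h i).trans hi

lemma sum_le_sum_of_upper {s : Fin S → ℝ} (hs : Monotone s) {A B : Finset (Fin S)}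
    (hcard : A.card = B.card) (hB : ∀ b ∈ B, ∀ c, b ≤ c → c ∈ B) :
    ∑ i ∈ A, s i ≤ ∑ i ∈ B, s i := by
  have hc : (A \ B).card = (B \ A).card := by
    have h1 := Finset.card_sdiff_add_card_inter A B
    have h2 := Finset.card_sdiff_add_card_inter B A
    rw [Finset.inter_comm] at h2
    omega
  have key : ∑ i ∈ A \ B, s i ≤ ∑ i ∈ B \ A, s i := by
    rcases (B \ A).eq_empty_or_nonempty with he | hne
    · have hAe : A \ B = ∅ := Finset.card_eq_zero.1 (by rw [hc, he]; simp)
      simp [he, hAe]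
    · set b₀ := (B \ A).min' hne with hb₀def
      have hb₀ : b₀ ∈ B \ A := min'_mem _ _
      have h1 : ∀ a ∈ A \ B, s a ≤ s b₀ := by
        intro a ha
        have haB : a ∉ B := (Finset.mem_sdiff.1 ha).2
        have : a ≤ b₀ := by
          by_contra hab
          push_neg at hab
          exact haB (hB b₀ (Finset.mem_sdiff.1 hb₀).1 a hab.le)
        exact hs this
      have h2 : ∀ b ∈ B \ A, s b₀ ≤ s b := fun b hb => hs (min'_le _ _ hb)
      calc ∑ i ∈ A \ B, s i ≤ (A \ B).card • s b₀ := Finset.sum_le_card_nsmul _ _ _ h1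
        _ = (B \ A).card • s b₀ := by rw [hc]
        _ ≤ ∑ i ∈ B \ A, s i := Finset.card_nsmul_le_sum _ _ _ h2
  have hA : ∑ i ∈ A, s i = ∑ i ∈ A ∩ B, s i + ∑ i ∈ A \ B, s i :=
    (Finset.sum_inter_add_sum_sdiff A B s).symm
  have hBs : ∑ i ∈ B, s i = ∑ i ∈ B ∩ A, s i + ∑ i ∈ B \ A, s i :=
    (Finset.sum_inter_add_sum_sdiff B A s).symm
  rw [hA, hBs, Finset.inter_comm B A]
  exact add_le_add le_rfl key

def topSet (S r : ℕ) : Finset (Fin S) := univ.filter (fun i => S - r ≤ (i : ℕ))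

lemma topSet_upper {r : ℕ} : ∀ b ∈ topSet S r, ∀ c, b ≤ c → c ∈ topSet S r := by
  intro b hb c hbc
  simp only [topSet, mem_filter, mem_univ, true_and] at hb ⊢
  exact hb.trans (Fin.le_def.1 hbc)

lemma topSet_zero : topSet S 0 = ∅ := by
  ext i
  simp only [topSet, mem_filter, mem_univ, true_and, Finset.notMem_empty, iff_false]
  omega

lemma topSet_eq_Ici {r : ℕ} (h1 : 1 ≤ r) (h2 : r ≤ S) :
    topSet S r = Ici (⟨S - r, by omega⟩ : Fin S) := by
  ext i
  simp only [topSet, mem_filter, mem_univ, true_and, mem_Ici, Fin.le_def]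

lemma card_topSet {r : ℕ} (h : r ≤ S) : (topSet S r).card = r := by
  rcases Nat.eq_zero_or_pos r with rfl | h1
  · simp [topSet_zero]
  · rw [topSet_eq_Ici h1 h, Fin.card_Ici]
    show S - (S - r) = r
    omega

lemma starLE_topSet {u v : Fin S → ℝ} (h : starLE u v) {r : ℕ} (hr : r ≤ S) :
    ∑ i ∈ topSet S r, u i ≤ ∑ i ∈ topSet S r, v i := by
  rcases Nat.eq_zero_or_pos r with rfl | h1
  · simp [topSet_zero]
  · rw [topSet_eq_Ici h1 hr]
    exact h _

lemma sum_sortVec_eq_sum_image (z : Fin S → ℝ) (C : Finset (Fin S)) :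
    ∑ i ∈ C, sortVec z i = ∑ i ∈ C.image (Tuple.sort z), z i := by
  rw [Finset.sum_image (fun a _ b _ h => (Tuple.sort z).injective h)]
  rfl

lemma sum_le_sorted_tail {z : Fin S → ℝ} (hz : ∀ i, 0 ≤ z i) {C : Finset (Fin S)} (k : Fin S)
    (hC : C.card ≤ (Ici k).card) : ∑ i ∈ C, z i ≤ ∑ i ∈ Ici k, sortVec z i := by
  obtain ⟨C', hCC', hC'⟩ := Finset.exists_superset_card_eq hC
    (by rw [Fin.card_Ici, Fintype.card_fin]; omega)
  have h1 : ∑ i ∈ C, z i ≤ ∑ i ∈ C', z i :=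
    Finset.sum_le_sum_of_subset_of_nonneg hCC' (fun i _ _ => hz i)
  have h2 : ∑ i ∈ C'.image (Tuple.sort z).symm, sortVec z i = ∑ i ∈ C', z i := by
    rw [sum_sortVec_eq_sum_image, Finset.image_image]
    congr 1
    ext i
    simp
  have h3 : ∑ i ∈ C'.image (Tuple.sort z).symm, sortVec z i ≤ ∑ i ∈ Ici k, sortVec z i := by
    apply sum_le_sum_of_upper (sortVec_monotone z)
    · rw [Finset.card_image_of_injective _ (Tuple.sort z).symm.injective, hC']
    · intro b hb c hbc
      rw [mem_Ici] at hb ⊢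
      exact hb.trans hbc
  linarith

lemma sum_shift (w : Fin S → ℝ) (Q : Fin S) (σ ξ : ℝ) (B : Finset (Fin S)) :
    ∑ i ∈ B, (w i + (if i = Q then σ else 0) - ξ)
      = ∑ i ∈ B, w i + (if Q ∈ B then σ else 0) - (B.card : ℝ) * ξ := by
  rw [Finset.sum_sub_distrib, Finset.sum_add_distrib,
    Finset.sum_ite_eq' B Q (fun _ => σ), Finset.sum_const]
  simp [nsmul_eq_mul]

lemma key_star (hS : 0 < S) (P : Fin S) (σ ξ : ℝ) (hσ : 0 ≤ σ) (hξ : 0 ≤ ξ)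
    {u v : Fin S → ℝ} (hu : Monotone u) (hv : Monotone v)
    (hst : starLE u v) (hP : u P ≤ v P) :
    starLE (GP σ ξ ⟨0, hS⟩ u) (GP σ ξ P v) := by
  intro k
  set z0 : Fin S := ⟨0, hS⟩ with hz0
  set x : Fin S → ℝ := fun i => u i + (if i = z0 then σ else 0) - ξ with hx
  set y : Fin S → ℝ := fun i => v i + (if i = P then σ else 0) - ξ with hy
  set zu : Fin S → ℝ := fun i => max (x i) 0 with hzu
  set zv : Fin S → ℝ := fun i => max (y i) 0 with hzv
  show ∑ i ∈ Ici k, sortVec zu i ≤ ∑ i ∈ Ici k, sortVec zv i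
  set m := (Ici k).card with hm
  have hmS : m ≤ S := by rw [hm, Fin.card_Ici]; omega
  set A₀ := (Ici k).image (Tuple.sort zu) with hA0
  have hA0card : A₀.card = m := Finset.card_image_of_injective _ (Tuple.sort zu).injective
  have hL : ∑ i ∈ Ici k, sortVec zu i = ∑ i ∈ A₀, zu i := sum_sortVec_eq_sum_image zu _
  set A := A₀.filter (fun i => 0 ≤ x i) with hA
  have hLA : ∑ i ∈ A₀, zu i = ∑ i ∈ A, x i := by
    rw [← Finset.sum_filter_add_sum_filter_not A₀ (fun i => 0 ≤ x i) zu]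
    rw [Finset.sum_eq_zero (fun i hi => max_eq_right (le_of_not_ge (Finset.mem_filter.1 hi).2)),
      add_zero]
    exact Finset.sum_congr rfl (fun i hi => max_eq_left (Finset.mem_filter.1 hi).2)
  set j := A.card with hj
  have hjm : j ≤ m := by
    rw [hj, ← hA0card]; exact card_le_card (filter_subset _ _)
  have hjS : j ≤ S := hjm.trans hmS
  obtain ⟨B, hBcard, hBub⟩ : ∃ B : Finset (Fin S), B.card = j ∧
      ∑ i ∈ A, u i + (if z0 ∈ A then σ else 0) ≤ ∑ i ∈ B, v i + (if P ∈ B then σ else 0) := by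
    by_cases h0 : z0 ∈ A
    · by_cases hPt : P ∈ topSet S j
      · refine ⟨topSet S j, card_topSet hjS, ?_⟩
        rw [if_pos h0, if_pos hPt]
        have h1 : ∑ i ∈ A, u i ≤ ∑ i ∈ topSet S j, u i :=
          sum_le_sum_of_upper hu (by rw [card_topSet hjS]) topSet_upper
        linarith [starLE_topSet hst hjS]
      · have hj1 : 1 ≤ j := Finset.card_pos.2 ⟨z0, h0⟩
        have hPnot : P ∉ topSet S (j - 1) := by
          intro hc
          apply hPt
          simp only [topSet, mem_filter, mem_univ, true_and] at hc ⊢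
          omega
        refine ⟨insert P (topSet S (j - 1)), ?_, ?_⟩
        · rw [Finset.card_insert_of_notMem hPnot, card_topSet (by omega)]; omega
        · rw [Finset.sum_insert hPnot, if_pos h0,
            if_pos (Finset.mem_insert_self P _)]
          have hA' : ∑ i ∈ A, u i = u z0 + ∑ i ∈ A.erase z0, u i :=
            (Finset.add_sum_erase A u h0).symm
          have h1 : ∑ i ∈ A.erase z0, u i ≤ ∑ i ∈ topSet S (j - 1), u i :=
            sum_le_sum_of_upper hu
              (by rw [Finset.card_erase_of_mem h0, card_topSet (by omega)]) topSet_upper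
          have h2 := starLE_topSet hst (u := u) (v := v) (r := j - 1) (by omega)
          have h3 : u z0 ≤ v P := by
            refine le_trans (hu ?_) hP
            simp [hz0, Fin.le_def]
          linarith
    · refine ⟨topSet S j, card_topSet hjS, ?_⟩
      rw [if_neg h0]
      have h1 : ∑ i ∈ A, u i ≤ ∑ i ∈ topSet S j, u i :=
        sum_le_sum_of_upper hu (by rw [card_topSet hjS]) topSet_upper
      have h2 := starLE_topSet hst (u := u) (v := v) hjS
      have h3 : (0 : ℝ) ≤ if P ∈ topSet S j then σ else 0 := by
        split <;> simp [hσ]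
      linarith
  have hfin : ∑ i ∈ B, y i ≤ ∑ i ∈ Ici k, sortVec zv i := by
    have h1 : ∑ i ∈ B, y i ≤ ∑ i ∈ B, zv i := Finset.sum_le_sum (fun i _ => le_max_left _ _)
    have h2 := sum_le_sorted_tail (z := zv) (fun i => le_max_right _ _) k
      (by rw [hBcard, ← hm]; exact hjm)
    linarith
  calc ∑ i ∈ Ici k, sortVec zu i = ∑ i ∈ A, x i := by rw [hL, hLA]
    _ = ∑ i ∈ A, u i + (if z0 ∈ A then σ else 0) - (j : ℝ) * ξ := by
        rw [hx]; rw [sum_shift u z0 σ ξ A, hj]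
    _ ≤ ∑ i ∈ B, v i + (if P ∈ B then σ else 0) - (j : ℝ) * ξ := by linarith
    _ = ∑ i ∈ B, y i := by rw [hy, sum_shift v P σ ξ B, hBcard]
    _ ≤ ∑ i ∈ Ici k, sortVec zv i := hfin

lemma key_ptwise (hS : 0 < S) (P : Fin S) (σ ξ : ℝ) (hσ : 0 ≤ σ) (hξ : 0 ≤ ξ)
    {u v : Fin S → ℝ} (hu : Monotone u) (hv : Monotone v)
    (hp : ∀ ℓ : Fin S, P ≤ ℓ → u ℓ ≤ v ℓ) (ℓ : Fin S) (hℓ : P ≤ ℓ) :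
    GP σ ξ ⟨0, hS⟩ u ℓ ≤ GP σ ξ P v ℓ := by
  set z0 : Fin S := ⟨0, hS⟩ with hz0
  set zu : Fin S → ℝ := fun i => max (u i + (if i = z0 then σ else 0) - ξ) 0 with hzu
  set zv : Fin S → ℝ := fun i => max (v i + (if i = P then σ else 0) - ξ) 0 with hzv
  show sortVec zu ℓ ≤ sortVec zv ℓ
  set t := sortVec zv ℓ with ht
  rw [sortVec_le_iff]
  have hcv : (ℓ : ℕ) + 1 ≤ (univ.filter fun i => zv i ≤ t).card :=
    (sortVec_le_iff zv ℓ t).1 le_rfl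
  have hfv : max (v ℓ - ξ) 0 ≤ t := by
    have h1 : ∀ i, max (v i - ξ) 0 ≤ zv i := by
      intro i
      apply max_le_max _ le_rfl
      have : (0 : ℝ) ≤ if i = P then σ else 0 := by split <;> simp [hσ]
      linarith
    have h2 : Monotone (fun i => max (v i - ξ) 0) := fun a b hab =>
      max_le_max (by linarith [hv hab]) le_rfl
    have h3 := sortVec_le_sortVec h1 ℓ
    rwa [sortVec_eq_of_monotone h2] at h3
  have hmid : ∀ i : Fin S, i ≠ z0 → i ≤ ℓ → zu i ≤ t := by
    intro i hiz hil
    have h1 : zu i = max (u i - ξ) 0 := by simp [hzu, hiz]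
    rw [h1]
    refine le_trans (max_le_max ?_ le_rfl) hfv
    have h2 := hu hil
    have h3 := hp ℓ hℓ
    linarith
  by_cases hPcase : zv P ≤ t
  · have hsub : Iic ℓ ⊆ univ.filter fun i => zu i ≤ t := by
      intro i hi
      simp only [mem_filter, mem_univ, true_and]
      by_cases hiz : i = z0
      · subst hiz
        have h1 : zu z0 = max (u z0 + σ - ξ) 0 := by simp [hzu]
        have h2 : zv P = max (v P + σ - ξ) 0 := by simp [hzv]
        rw [h1]
        refine le_trans ?_ hPcase
        rw [h2]
        apply max_le_max _ le_rfl
        have h3 : u z0 ≤ v P := by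
          refine le_trans (hu ?_) (hp P le_rfl)
          simp [hz0, Fin.le_def]
        linarith
      · exact hmid i hiz (mem_Iic.1 hi)
    calc (ℓ : ℕ) + 1 = (Iic ℓ).card := (Fin.card_Iic ℓ).symm
      _ ≤ _ := card_le_card hsub
  · obtain ⟨jx, hjx1, hjx2⟩ : ∃ jx, zv jx ≤ t ∧ ℓ < jx := by
      by_contra hcon
      push_neg at hcon
      have hsub : (univ.filter fun i => zv i ≤ t) ⊆ (Iic ℓ).erase P := by
        intro i hi
        simp only [mem_filter, mem_univ, true_and] at hi
        rw [Finset.mem_erase, mem_Iic]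
        refine ⟨?_, hcon i hi⟩
        rintro rfl
        exact hPcase hi
      have hcc := card_le_card hsub
      rw [Finset.card_erase_of_mem (mem_Iic.2 hℓ), Fin.card_Iic] at hcc
      omega
    have hz0lt : z0 < jx := by
      refine lt_of_le_of_lt ?_ hjx2
      simp [hz0, Fin.le_def]
    have hjz : jx ≠ z0 := (ne_of_lt hz0lt).symm
    have hjP : jx ≠ P := (ne_of_lt (lt_of_le_of_lt hℓ hjx2)).symm
    have hzuj : zu jx ≤ t := by
      have h1 : zu jx = max (u jx - ξ) 0 := by simp [hzu, hjz]
      have h2 : zv jx = max (v jx - ξ) 0 := by simp [hzv, hjP]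
      rw [h1]
      refine le_trans ?_ hjx1
      rw [h2]
      apply max_le_max _ le_rfl
      have := hp jx (hℓ.trans hjx2.le)
      linarith
    have hjnot : jx ∉ Ioc z0 ℓ := by
      rw [mem_Ioc]
      rintro ⟨-, h⟩
      exact absurd hjx2 (not_lt.2 h)
    have hsub : insert jx (Ioc z0 ℓ) ⊆ univ.filter fun i => zu i ≤ t := by
      intro i hi
      rcases Finset.mem_insert.1 hi with rfl | hi'
      · simp only [mem_filter, mem_univ, true_and]
        exact hzuj
      · rw [mem_Ioc] at hi'
        simp only [mem_filter, mem_univ, true_and]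
        exact hmid i (ne_of_lt hi'.1).symm hi'.2
    have hcard : (insert jx (Ioc z0 ℓ)).card = (ℓ : ℕ) + 1 := by
      rw [Finset.card_insert_of_notMem hjnot, Fin.card_Ioc]
      show (ℓ : ℕ) - (0 : ℕ) + 1 = (ℓ : ℕ) + 1
      omega
    calc (ℓ : ℕ) + 1 = _ := hcard.symm
      _ ≤ _ := card_le_card hsub

end Aux

/-- transient comparison of JSW with allocation to the `P`-th least
workload: if `V_0 ≺_P Ṽ_0` then `V_n ≺_P Ṽ_n` for all `n`. -/

theorem precP_of_rec {S : ℕ} (hS : 0 < S) (P : Fin S) (σ ξ : ℕ → ℝ)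
    (hσ : ∀ n, 0 ≤ σ n) (hξ : ∀ n, 0 ≤ ξ n)
    (V W : ℕ → Fin S → ℝ)
    (hV0 : Monotone (V 0)) (hV0' : ∀ i, 0 ≤ V 0 i)
    (hW0 : Monotone (W 0)) (hW0' : ∀ i, 0 ≤ W 0 i)
    (hVrec : ∀ n, V (n + 1) = GP (σ n) (ξ n) ⟨0, hS⟩ (V n))
    (hWrec : ∀ n, W (n + 1) = GP (σ n) (ξ n) P (W n))
    (h0 : precP P (V 0) (W 0)) :
    ∀ n, precP P (V n) (W n) ∧
      (starLE (V n) (W n) ∧ ∀ ℓ : Fin S, P ≤ ℓ → V n ℓ ≤ W n ℓ) := by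
  have main : ∀ n, Monotone (V n) ∧ Monotone (W n) ∧ precP P (V n) (W n) := by
    intro n
    induction n with
    | zero => exact ⟨hV0, hW0, h0⟩
    | succ n ih =>
      obtain ⟨hm1, hm2, hst, hp⟩ := ih
      rw [hVrec, hWrec]
      refine ⟨sortVec_monotone _, sortVec_monotone _, ?_, ?_⟩
      · exact key_star hS P (σ n) (ξ n) (hσ n) (hξ n) hm1 hm2 hst (hp P le_rfl)
      · exact fun ℓ hℓ => key_ptwise hS P (σ n) (ξ n) (hσ n) (hξ n) hm1 hm2 hp ℓ hℓ
  intro n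
  obtain ⟨-, -, hp⟩ := main n
  exact ⟨hp, hp.1, hp.2⟩
end

section
/- Let S ≥ 1, P ∈ {1,...,S}, σ ≥ 0, ξ ≥ 0, and let u ∈ (ℝ⁺)^S be a nondecreasingly sorted vector. Then for every ℓ ∈ {P,...,S}: if ℓ < S, G̃^P(u)(ℓ) = [max(u(ℓ), min(u(P)+σ, u(ℓ+1))) − ξ]⁺, and G̃^P(u)(S) = [max(u(S), u(P)+σ) − ξ]⁺, where G̃^P(u) = sort([u + σ·e_P − ξ·1]⁺). -/
/-!
Away from `P` the vector `[u + σ e_P - ξ 1]⁺` is `[u - ξ 1]⁺`, and sorting commutes with the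
monotone map `t ↦ [t - ξ]⁺`, so it suffices to sort `u` with its `P`-th entry raised to
`c = u P + σ ≥ u P`. Sorting moves the raised entry up to the last position `m` with `u m ≤ c`,
i.e. applies the cycle `(P P+1 … m)`: for `P ≤ ℓ` the sorted vector reads `u (ℓ+1)` if `ℓ < m`,
`c` if `ℓ = m` and `u ℓ` if `ℓ > m`, which is `max (u ℓ) (min c (u (ℓ+1)))` in all three cases.
-/

open Finset

theorem sortVec_eq_comp_of_monotone {S : ℕ} {v : Fin S → ℝ} (e : Equiv.Perm (Fin S))
    (he : Monotone (v ∘ e)) : sortVec v = v ∘ e :=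
  (Tuple.comp_sort_eq_comp_iff_monotone.mpr he).symm

theorem sortVec_comp_of_monotone {S : ℕ} {g : ℝ → ℝ} (hg : Monotone g) (v : Fin S → ℝ) :
    sortVec (g ∘ v) = g ∘ sortVec v :=
  sortVec_eq_comp_of_monotone _ (hg.comp (Tuple.monotone_sort v))

section Insertion

variable {α : Type*} {S : ℕ} {f : Fin S → α} {P m : Fin S} {c : α}

theorem exists_insertion_index [LinearOrder α] (hc : f P ≤ c) :
    ∃ m, P ≤ m ∧ f m ≤ c ∧ ∀ k, m < k → c < f k := by
  classical
  have hP : P ∈ univ.filter (f · ≤ c) := by simpa using hc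
  refine ⟨(univ.filter (f · ≤ c)).max' ⟨P, hP⟩, le_max' _ P hP, ?_, fun k hk => ?_⟩
  · simpa using max'_mem _ ⟨P, hP⟩
  · by_contra! hkc
    exact (le_max' _ k (by simpa using hkc)).not_gt hk

theorem fin_val_add_one_of_lt [NeZero S] {k m : Fin S} (hkm : k < m) :
    ((k + 1 : Fin S) : ℕ) = k + 1 :=
  Fin.val_add_one_of_lt' (by have := m.isLt; rw [Fin.lt_def] at hkm; omega)

theorem update_cycleIcc_apply [NeZero S] (hPm : P ≤ m) (k : Fin S) :
    Function.update f P c (Fin.cycleIcc P m k) =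
      if k < P ∨ m < k then f k else if k = m then c else f (k + 1) := by
  rcases lt_or_ge k P with hkP | hPk
  · rw [Fin.cycleIcc_of_lt hkP, Function.update_of_ne hkP.ne, if_pos (Or.inl hkP)]
  rcases lt_or_ge m k with hmk | hkm
  · rw [Fin.cycleIcc_of_gt hmk, Function.update_of_ne (hPm.trans_lt hmk).ne',
      if_pos (Or.inr hmk)]
  rw [Fin.cycleIcc_of_le_of_le hPk hkm, if_neg (not_or.2 ⟨hPk.not_gt, hkm.not_gt⟩)]
  by_cases hk : k = m
  · simp [hk]
  · rw [if_neg hk, if_neg hk, Function.update_of_ne]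
    rw [Ne, Fin.ext_iff, fin_val_add_one_of_lt (lt_of_le_of_ne hkm hk)]
    have := Fin.le_def.1 hPk
    omega

theorem le_update_cycleIcc_apply [LinearOrder α] [NeZero S] (hf : Monotone f) (hPm : P ≤ m)
    (hm : f m ≤ c) (k : Fin S) : f k ≤ Function.update f P c (Fin.cycleIcc P m k) := by
  rw [update_cycleIcc_apply hPm]
  split_ifs with hout hkm
  · exact le_rfl
  · exact hkm ▸ hm
  · have hk1 := fin_val_add_one_of_lt (lt_of_le_of_ne (not_lt.1 (not_or.1 hout).2) hkm)
    exact hf (by rw [Fin.le_def, hk1]; omega)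

theorem update_cycleIcc_apply_le_of_lt [LinearOrder α] [NeZero S] (hf : Monotone f)
    (hPm : P ≤ m) (hgt : ∀ k, m < k → c < f k) {a b : Fin S} (hab : a < b) :
    Function.update f P c (Fin.cycleIcc P m a) ≤ f b := by
  rw [update_cycleIcc_apply hPm]
  split_ifs with hout ham
  · exact hf hab.le
  · exact (hgt b (ham ▸ hab)).le
  · have ha1 := fin_val_add_one_of_lt (lt_of_le_of_ne (not_lt.1 (not_or.1 hout).2) ham)
    rw [Fin.lt_def] at hab
    exact hf (by rw [Fin.le_def, ha1]; omega)

theorem monotone_update_comp_cycleIcc [LinearOrder α] [NeZero S] (hf : Monotone f) (hPm : P ≤ m)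
    (hm : f m ≤ c) (hgt : ∀ k, m < k → c < f k) :
    Monotone (Function.update f P c ∘ Fin.cycleIcc P m) := by
  intro a b hab
  rcases hab.lt_or_eq with hab | rfl
  · exact (update_cycleIcc_apply_le_of_lt hf hPm hgt hab).trans
      (le_update_cycleIcc_apply hf hPm hm b)
  · exact le_rfl

end Insertion

theorem sortVec_update_apply_of_ge {S : ℕ} {f : Fin S → ℝ} {P : Fin S} {c : ℝ} (hf : Monotone f)
    (hc : f P ≤ c) {ℓ : Fin S} (hℓ : P ≤ ℓ) :
    (∀ h : (ℓ : ℕ) + 1 < S, sortVec (Function.update f P c) ℓ =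
        max (f ℓ) (min c (f ⟨(ℓ : ℕ) + 1, h⟩))) ∧
      ((ℓ : ℕ) + 1 = S → sortVec (Function.update f P c) ℓ = max (f ℓ) c) := by
  have : NeZero S := ⟨ℓ.pos.ne'⟩
  obtain ⟨m, hPm, hm, hgt⟩ := exists_insertion_index hc
  have hnext (h : (ℓ : ℕ) + 1 < S) (hmℓ : m ≤ ℓ) : c < f ⟨(ℓ : ℕ) + 1, h⟩ :=
    hgt _ (Fin.lt_def.2 (Nat.lt_succ_of_le (Fin.le_def.1 hmℓ)))
  rw [sortVec_eq_comp_of_monotone _ (monotone_update_comp_cycleIcc hf hPm hm hgt),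
    Function.comp_apply, update_cycleIcc_apply hPm]
  rcases lt_trichotomy ℓ m with hℓm | rfl | hmℓ
  · rw [if_neg (not_or.2 ⟨hℓ.not_gt, hℓm.not_gt⟩), if_neg hℓm.ne]
    refine ⟨fun h => ?_, fun h => by have := Fin.lt_def.1 hℓm; have := m.isLt; omega⟩
    have hℓ1 : (ℓ + 1 : Fin S) = ⟨(ℓ : ℕ) + 1, h⟩ := Fin.ext (fin_val_add_one_of_lt hℓm)
    have hle : f ⟨(ℓ : ℕ) + 1, h⟩ ≤ c := (hf (show (ℓ : ℕ) + 1 ≤ m from hℓm)).trans hm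
    rw [hℓ1, min_eq_right hle, max_eq_right (hf (Fin.le_def.2 (Nat.le_succ _)))]
  · rw [if_neg (by simp [hℓ]), if_pos rfl]
    exact ⟨fun h => by rw [min_eq_left (hnext h le_rfl).le, max_eq_right hm],
      fun _ => (max_eq_right hm).symm⟩
  · rw [if_pos (Or.inr hmℓ)]
    exact ⟨fun h => by rw [min_eq_left (hnext h hmℓ.le).le, max_eq_left (hgt ℓ hmℓ).le],
      fun _ => (max_eq_left (hgt ℓ hmℓ).le).symm⟩

theorem GP_eq_comp_sortVec_update {S : ℕ} (σ ξ : ℝ) (P : Fin S) (u : Fin S → ℝ) :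
    GP σ ξ P u = (fun t => max (t - ξ) 0) ∘ sortVec (Function.update u P (u P + σ)) := by
  rw [← sortVec_comp_of_monotone fun a b hab => max_le_max (sub_le_sub_right hab ξ) le_rfl, GP]
  congr 1
  funext i
  by_cases hi : i = P
  · subst hi
    simp
  · simp [hi]

theorem GP_apply_of_ge_general {S : ℕ} (P : Fin S) (σ ξ : ℝ)
    (hσ : 0 ≤ σ)
    (u : Fin S → ℝ) (hu : Monotone u) :
    ∀ ℓ : Fin S, P ≤ ℓ →
      (∀ h : (ℓ : ℕ) + 1 < S,
          GP σ ξ P u ℓ =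
            max (max (u ℓ) (min (u P + σ) (u ⟨(ℓ : ℕ) + 1, h⟩)) - ξ) 0) ∧
      ((ℓ : ℕ) + 1 = S →
          GP σ ξ P u ℓ = max (max (u ℓ) (u P + σ) - ξ) 0) := by
  intro ℓ hℓ
  obtain ⟨hlt, hlast⟩ := sortVec_update_apply_of_ge hu (le_add_of_nonneg_right hσ) hℓ
  exact ⟨fun h => by rw [GP_eq_comp_sortVec_update, Function.comp_apply, hlt h],
    fun h => by rw [GP_eq_comp_sortVec_update, Function.comp_apply, hlast h]⟩

/-- explicit formula for the coordinates `ℓ ≥ P` of `G̃^P(u)`. -/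
theorem GP_apply_of_ge {S : ℕ} (hS : 0 < S) (P : Fin S) (σ ξ : ℝ)
    (hσ : 0 ≤ σ) (hξ : 0 ≤ ξ)
    (u : Fin S → ℝ) (hu : Monotone u) (hu0 : ∀ i, 0 ≤ u i) :
    ∀ ℓ : Fin S, P ≤ ℓ →
      (∀ h : (ℓ : ℕ) + 1 < S,
          GP σ ξ P u ℓ =
            max (max (u ℓ) (min (u P + σ) (u ⟨(ℓ : ℕ) + 1, h⟩)) - ξ) 0) ∧
      ((ℓ : ℕ) + 1 = S →
          GP σ ξ P u ℓ = max (max (u ℓ) (u P + σ) - ξ) 0) :=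
  GP_apply_of_ge_general P σ ξ hσ u hu
end

section
/- Let S ≥ 1, P ∈ {1,...,S}, σ ≥ 0, ξ ≥ 0, and let u, v ∈ (ℝ⁺)^S be nondecreasingly sorted vectors with u ≺_* v and u(P) ≤ v(P). Then for every k ∈ {1,...,S}, Σ_{i=k, i≠P}^S [u(i) − ξ]⁺ + [u(P) + σ − ξ]⁺ ≤ Σ_{i=k, i≠P}^S [v(i) − ξ]⁺ + [v(P) + σ − ξ]⁺. -/
/-!
Since `u` is monotone, the indices `i ≥ k` with `u i > ξ` form an upper set `T` of `Fin S`, i.e.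
a tail, so `≺_*` gives `∑_T (u - ξ) ≤ ∑_T (v - ξ)`. The sum of positive parts of `u - ξ` over
`i ≥ k` is exactly `∑_T (u - ξ)`, while for `v` it dominates `∑_B (v - ξ)` for every set `B` of
such indices. If `P ∈ T`, then `σ ≥ 0` keeps the shifted `P`-term positive and both sides simply
gain `σ`; otherwise the `P`-term is compared on its own using `u P ≤ v P`.
-/

open Finset

theorem starLE.sum_le_sum_of_isUpperSet {S : ℕ} {u v : Fin S → ℝ} (huv : starLE u v)
    {T : Finset (Fin S)} (hT : IsUpperSet (T : Set (Fin S))) :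
    ∑ i ∈ T, u i ≤ ∑ i ∈ T, v i := by
  obtain hT | ⟨m, hm⟩ := hT.eq_empty_or_Ici
  · simp [coe_eq_empty.1 hT]
  · rw [← coe_Ici, coe_inj] at hm
    exact hm ▸ huv m

theorem Finset.sum_le_sum_max_zero_of_subset {ι M : Type*} [AddCommMonoid M] [LinearOrder M]
    [IsOrderedAddMonoid M] {B A : Finset ι} (f : ι → M)
    (hBA : B ⊆ A) : ∑ i ∈ B, f i ≤ ∑ i ∈ A, max (f i) 0 :=
  (sum_le_sum fun _ _ => le_max_left _ _).trans
    (sum_le_sum_of_subset_of_nonneg hBA fun _ _ _ => le_max_right _ _)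

theorem Finset.sum_max_zero_eq_sum_filter_pos {ι M : Type*} [AddCommMonoid M] [LinearOrder M]
    (A : Finset ι) (f : ι → M) :
    ∑ i ∈ A, max (f i) 0 = ∑ i ∈ A.filter (fun i => 0 < f i), f i := by
  rw [sum_filter]
  refine sum_congr rfl fun i _ => ?_
  split_ifs with h
  · exact max_eq_left h.le
  · exact max_eq_right (not_lt.1 h)

theorem IsUpperSet.finset_filter_lt {α β : Type*} [Preorder α] [Preorder β] [DecidableLT β]
    {s : Finset α} (hs : IsUpperSet (s : Set α)) {f : α → β} (hf : Monotone f) (c : β) :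
    IsUpperSet (s.filter (fun i => c < f i) : Set α) := by
  rw [coe_filter]
  exact fun i j hij hi => ⟨hs hij hi.1, hi.2.trans_le (hf hij)⟩

theorem Finset.sum_max_sub_zero_eq_sum_filter_lt {ι M : Type*} [AddCommGroup M] [LinearOrder M]
    [IsOrderedAddMonoid M] (A : Finset ι) (f : ι → M) (c : M) :
    ∑ i ∈ A, max (f i - c) 0 = ∑ i ∈ A.filter (fun i => c < f i), (f i - c) := by
  simp_rw [sum_max_zero_eq_sum_filter_pos, sub_pos]

theorem starLE.sum_filter_Ici_sub_le {S : ℕ} {u v : Fin S → ℝ} (huv : starLE u v)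
    (hu : Monotone u) (k : Fin S) (c : ℝ) :
    ∑ i ∈ (Ici k).filter (fun i => c < u i), (u i - c) ≤
      ∑ i ∈ (Ici k).filter (fun i => c < u i), (v i - c) := by
  have hk : IsUpperSet (Ici k : Set (Fin S)) := coe_Ici k ▸ isUpperSet_Ici k
  have hT := hk.finset_filter_lt hu c
  simp only [sum_sub_distrib]
  linarith [huv.sum_le_sum_of_isUpperSet hT]

theorem tail_pos_part_le_general {S : ℕ} (P : Fin S) (σ ξ : ℝ)
    (hσ : 0 ≤ σ)
    (u v : Fin S → ℝ)
    (hu : Monotone u)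
    (huv : starLE u v) (hP : u P ≤ v P) (k : Fin S) :
    (∑ i ∈ (Finset.Ici k).erase P, max (u i - ξ) 0) + max (u P + σ - ξ) 0 ≤
      (∑ i ∈ (Finset.Ici k).erase P, max (v i - ξ) 0) + max (v P + σ - ξ) 0 := by
  set T := (Ici k).filter (fun i => ξ < u i)
  have hTuv : ∑ i ∈ T, (u i - ξ) ≤ ∑ i ∈ T, (v i - ξ) := huv.sum_filter_Ici_sub_le hu k ξ
  by_cases hPT : P ∈ T
  · obtain ⟨hPk, hξP⟩ := mem_filter.1 hPT
    calc (∑ i ∈ (Ici k).erase P, max (u i - ξ) 0) + max (u P + σ - ξ) 0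
        = ∑ i ∈ Ici k, max (u i - ξ) 0 + σ := by
          rw [← sum_erase_add _ _ hPk, max_eq_left (by linarith), max_eq_left (by linarith)]
          ring
      _ = ∑ i ∈ T, (u i - ξ) + σ := by rw [sum_max_sub_zero_eq_sum_filter_lt]
      _ ≤ ∑ i ∈ T, (v i - ξ) + σ := by linarith
      _ = ∑ i ∈ T.erase P, (v i - ξ) + (v P + σ - ξ) := by
          rw [← sum_erase_add _ _ hPT]
          ring
      _ ≤ _ := by
          gcongr
          · exact sum_le_sum_max_zero_of_subset _ (erase_subset_erase _ (filter_subset _ _))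
          · exact le_max_left _ _
  · calc (∑ i ∈ (Ici k).erase P, max (u i - ξ) 0) + max (u P + σ - ξ) 0
        = ∑ i ∈ T, (u i - ξ) + max (u P + σ - ξ) 0 := by
          rw [sum_max_sub_zero_eq_sum_filter_lt, filter_erase, erase_eq_of_notMem hPT]
      _ ≤ ∑ i ∈ T, (v i - ξ) + max (v P + σ - ξ) 0 := by gcongr
      _ ≤ _ := by
          gcongr
          exact sum_le_sum_max_zero_of_subset _ (subset_erase.2 ⟨filter_subset _ _, hPT⟩)

/-- comparison of the shifted tail sums of positive parts under `≺_*`. -/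
theorem tail_pos_part_le {S : ℕ} (hS : 0 < S) (P : Fin S) (σ ξ : ℝ)
    (hσ : 0 ≤ σ) (hξ : 0 ≤ ξ)
    (u v : Fin S → ℝ)
    (hu : Monotone u) (hv : Monotone v)
    (hu0 : ∀ i, 0 ≤ u i) (hv0 : ∀ i, 0 ≤ v i)
    (huv : starLE u v) (hP : u P ≤ v P) (k : Fin S) :
    (∑ i ∈ (Finset.Ici k).erase P, max (u i - ξ) 0) + max (u P + σ - ξ) 0 ≤
      (∑ i ∈ (Finset.Ici k).erase P, max (v i - ξ) 0) + max (v P + σ - ξ) 0 :=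
  tail_pos_part_le_general P σ ξ hσ u v hu huv hP k
end
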